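/- arXiv:2007.09133 — 4 statements merged into one kernel-verified Lean document; each statement's English description precedes it below -/
import Mathlib

section
/- Greedy bag-filling correctness (condition set 1): Let v be an additive valuation with v(M) ≥ n, let B_1,...,B_n be disjoint bundles with v(B_k) ≤ 1 for all k, containing all items whose absolute value is at least ε, and suppose every remaining item has |v(j)| < ε. Then the following procedure yields a partition A_1,...,A_n of M with v(A_k) ≥ 1 − ε for all k: for k = 1,...,n−1, while v(B_k) < 1−ε add to B_k the unallocated small item of minimum value; finally add all remaining small items to B_n. Moreover each of A_1,...,A_{n−1} has value at most 1. -/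
open Finset
open scoped Classical

/-- `A` is a partition of the item set `M` into `n` (possibly empty) bundles. -/
def IsPartition {ι : Type*} [DecidableEq ι] (M : Finset ι) (n : ℕ)
    (A : Fin n → Finset ι) : Prop :=
  (∀ k, A k ⊆ M) ∧ (∀ k l, k ≠ l → Disjoint (A k) (A l)) ∧ (∀ j ∈ M, ∃ k, j ∈ A k)

/-- `μ` is the maximin share of the additive valuation `v` over `M` with `n` bundles:
some partition attains minimum bundle value at least `μ`, and every partition has a
bundle of value at most `μ`. -/
def IsMMS {ι : Type*} [DecidableEq ι] (v : ι → ℝ) (M : Finset ι) (n : ℕ) (μ : ℝ) : Prop :=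
  (∃ A : Fin n → Finset ι, IsPartition M n A ∧ ∀ k, μ ≤ ∑ j ∈ A k, v j) ∧
  (∀ A : Fin n → Finset ι, IsPartition M n A → ∃ k, ∑ j ∈ A k, v j ≤ μ)

/-!
Fill the bags one at a time from the pool of small items. While a bag is worth less than
`1 - ε`, adding any item of value below `ε` keeps it at most `1`, so the bag can be brought into
`[1 - ε, 1]` as soon as the whole pool would lift it to `1 - ε`; this holds because the total value
is at least `n` and each of the other bags is worth at most `1`. The last bag takes what is left;
it is worth at least `1`, since the others are worth at most `1` each. Only the bound `v j < ε`
on the small items enters, so they may be picked in any order.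
-/

theorem exists_subset_add_sum_mem_Icc {ι : Type*} [DecidableEq ι] (v : ι → ℝ) {ε c : ℝ}
    (S : Finset ι) (hS : ∀ j ∈ S, v j < ε) {b : ℝ} (hb : b ≤ c)
    (hbS : c - ε ≤ b + ∑ j ∈ S, v j) :
    ∃ T ⊆ S, b + ∑ j ∈ T, v j ∈ Set.Icc (c - ε) c := by
  induction S using Finset.induction_on generalizing b with
  | empty => exact ⟨∅, subset_rfl, by simpa using hbS, by simpa using hb⟩
  | @insert x S hx ih =>
    by_cases hdone : c - ε ≤ b
    · exact ⟨∅, empty_subset _, by simpa using hdone, by simpa using hb⟩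
    have hvx : v x < ε := hS x (mem_insert_self x S)
    rw [sum_insert hx, ← add_assoc] at hbS
    obtain ⟨T, hTS, hT⟩ :=
      ih (fun j hj => hS j (mem_insert_of_mem hj)) (b := b + v x) (by linarith) hbS
    refine ⟨insert x T, insert_subset_insert x hTS, ?_⟩
    rwa [sum_insert fun hxT => hx (hTS hxT), ← add_assoc]

theorem IsPartition.cons {ι : Type*} [DecidableEq ι] {P T₀ : Finset ι} {n : ℕ}
    {T : Fin n → Finset ι} (h₀ : T₀ ⊆ P) (hT : IsPartition (P \ T₀) n T) :
    IsPartition P (n + 1) (Fin.cons T₀ T) := by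
  obtain ⟨hsub, hdisj, hcover⟩ := hT
  have hdisj₀ : ∀ k, Disjoint T₀ (T k) := fun k =>
    disjoint_of_subset_right (hsub k) disjoint_sdiff
  refine ⟨Fin.forall_fin_succ.2 ⟨h₀, fun k => (hsub k).trans sdiff_subset⟩, ?_, ?_⟩
  · refine Fin.forall_fin_succ.2 ⟨Fin.forall_fin_succ.2 ⟨fun h => absurd rfl h, ?_⟩, ?_⟩
    · exact fun l _ => hdisj₀ l
    · refine fun k => Fin.forall_fin_succ.2 ⟨fun _ => (hdisj₀ k).symm, fun l hkl => ?_⟩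
      exact hdisj k l fun h => hkl (congrArg Fin.succ h)
  · intro j hj
    by_cases hj₀ : j ∈ T₀
    · exact ⟨0, hj₀⟩
    · obtain ⟨k, hk⟩ := hcover j (mem_sdiff.2 ⟨hj, hj₀⟩)
      exact ⟨k.succ, hk⟩

theorem disjoint_of_subset_sdiff_biUnion {ι : Type*} [DecidableEq ι] {M T : Finset ι} {n : ℕ}
    (B : Fin n → Finset ι) (k : Fin n) (hT : T ⊆ M \ univ.biUnion B) : Disjoint (B k) T :=
  disjoint_of_subset_right hT (disjoint_sdiff.mono_left (subset_biUnion_of_mem B (mem_univ k)))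

theorem IsPartition.union_of_sdiff_biUnion {ι : Type*} [DecidableEq ι] {M : Finset ι} {n : ℕ}
    {B T : Fin n → Finset ι} (hBsub : ∀ k, B k ⊆ M)
    (hBdisj : ∀ k l, k ≠ l → Disjoint (B k) (B l))
    (hT : IsPartition (M \ univ.biUnion B) n T) :
    IsPartition M n (fun k => B k ∪ T k) := by
  obtain ⟨hsub, hdisj, hcover⟩ := hT
  have hBT : ∀ k l, Disjoint (B k) (T l) := fun k l =>
    disjoint_of_subset_sdiff_biUnion B k (hsub l)
  refine ⟨fun k => union_subset (hBsub k) ((hsub k).trans sdiff_subset), fun k l hkl => ?_, ?_⟩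
  · exact disjoint_union_left.2
      ⟨disjoint_union_right.2 ⟨hBdisj k l hkl, hBT k l⟩,
        disjoint_union_right.2 ⟨(hBT l k).symm, hdisj k l hkl⟩⟩
  · intro j hj
    by_cases hjB : j ∈ univ.biUnion B
    · obtain ⟨k, -, hk⟩ := mem_biUnion.1 hjB
      exact ⟨k, mem_union_left _ hk⟩
    · obtain ⟨k, hk⟩ := hcover j (mem_sdiff.2 ⟨hj, hjB⟩)
      exact ⟨k, mem_union_right _ hk⟩

theorem exists_isPartition_add_sum_ge {ι : Type*} [DecidableEq ι] (v : ι → ℝ) {ε : ℝ}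
    (hε : 0 ≤ ε) (m : ℕ) (b : Fin (m + 1) → ℝ) (hb : ∀ k, b k ≤ 1) (P : Finset ι)
    (hP : ∀ j ∈ P, v j < ε) (htot : (m + 1 : ℝ) ≤ ∑ k, b k + ∑ j ∈ P, v j) :
    ∃ T : Fin (m + 1) → Finset ι, IsPartition P (m + 1) T ∧
      (∀ k, 1 - ε ≤ b k + ∑ j ∈ T k, v j) ∧
      (∀ k : Fin (m + 1), (k : ℕ) < m → b k + ∑ j ∈ T k, v j ≤ 1) := by
  induction m generalizing P with
  | zero =>
    refine ⟨fun _ => P, ⟨fun _ => subset_rfl,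
      fun k l hkl => absurd (Subsingleton.elim (α := Fin 1) k l) hkl, fun j hj => ⟨0, hj⟩⟩,
      fun k => ?_, fun k hk => absurd hk k.val.not_lt_zero⟩
    rw [Fin.fin_one_eq_zero k]
    simp only [Fin.sum_univ_succ, Fin.sum_univ_zero, add_zero, Nat.cast_zero, zero_add] at htot
    linarith
  | succ m ih =>
    have hrest : ∑ k : Fin (m + 1), b k.succ ≤ m + 1 := by
      simpa using sum_le_sum fun (k : Fin (m + 1)) (_ : k ∈ univ) => hb k.succ
    rw [Fin.sum_univ_succ] at htot
    push_cast at htot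
    obtain ⟨T₀, hT₀P, hT₀lo, hT₀hi⟩ :=
      exists_subset_add_sum_mem_Icc v P hP (hb 0) (by linarith)
    have htot' : (m + 1 : ℝ) ≤ ∑ k : Fin (m + 1), b k.succ + ∑ j ∈ P \ T₀, v j := by
      rw [sum_sdiff_eq_sub hT₀P]
      linarith
    obtain ⟨T, hT, hlo, hhi⟩ := ih (fun k => b k.succ) (fun k => hb k.succ) (P \ T₀)
      (fun j hj => hP j (mem_sdiff.1 hj).1) htot'
    refine ⟨Fin.cons T₀ T, hT.cons hT₀P, Fin.forall_fin_succ.2 ⟨hT₀lo, hlo⟩,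
      Fin.forall_fin_succ.2 ⟨fun _ => hT₀hi, fun k hk => hhi k ?_⟩⟩
    simpa using hk

theorem bag_filling_cond1_general {ι : Type*} [DecidableEq ι] (v : ι → ℝ) (M : Finset ι)
    (n : ℕ) (hn : 1 ≤ n) (ε : ℝ) (hε : 0 < ε)
    (B : Fin n → Finset ι) (hBsub : ∀ k, B k ⊆ M)
    (hBdisj : ∀ k l, k ≠ l → Disjoint (B k) (B l))
    (hBval : ∀ k, ∑ j ∈ B k, v j ≤ 1)
    (hsmall : ∀ j ∈ M, (∀ k, j ∉ B k) → |v j| < ε)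
    (htot : (n : ℝ) ≤ ∑ j ∈ M, v j) :
    ∃ A : Fin n → Finset ι, IsPartition M n A ∧ (∀ k, B k ⊆ A k) ∧
      (∀ k, 1 - ε ≤ ∑ j ∈ A k, v j) ∧
      (∀ k : Fin n, (k : ℕ) + 1 < n → ∑ j ∈ A k, v j ≤ 1) := by
  obtain ⟨m, rfl⟩ := Nat.exists_eq_add_of_le' hn
  set U := univ.biUnion B
  have hpool : ∀ j ∈ M \ U, v j < ε := fun j hj =>
    (le_abs_self _).trans_lt <| hsmall j (mem_sdiff.1 hj).1 fun k hk =>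
      (mem_sdiff.1 hj).2 (mem_biUnion.2 ⟨k, mem_univ k, hk⟩)
  have hsplit : ∑ j ∈ M, v j = ∑ k, ∑ j ∈ B k, v j + ∑ j ∈ M \ U, v j := by
    rw [← sum_biUnion fun k _ l _ hkl => hBdisj k l hkl, add_comm,
      sum_sdiff (biUnion_subset.2 fun k _ => hBsub k)]
  obtain ⟨T, hT, hlo, hhi⟩ := exists_isPartition_add_sum_ge v hε.le m
    (fun k => ∑ j ∈ B k, v j) hBval (M \ U) hpool (by rw [← hsplit]; exact_mod_cast htot)
  have hval : ∀ k, ∑ j ∈ B k ∪ T k, v j = ∑ j ∈ B k, v j + ∑ j ∈ T k, v j := fun k =>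
    sum_union (disjoint_of_subset_sdiff_biUnion B k (hT.1 k))
  refine ⟨fun k => B k ∪ T k, hT.union_of_sdiff_biUnion hBsub hBdisj,
    fun k => subset_union_left, fun k => ?_, fun k hk => ?_⟩
  · simpa only [hval] using hlo k
  · simpa only [hval] using hhi k (by omega)

/-- Bag-filling correctness (condition set 1): if `v(M) ≥ n`, the disjoint initial bags
`B k ⊆ M` each have value at most `1` and contain all items of absolute value at least
`ε`, and all remaining (small) items satisfy `|v j| < ε`, then there is a partition
`A` of `M` extending the bags with every bundle of value at least `1 - ε`, and every
bundle except the last of value at most `1`. -/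
theorem bag_filling_cond1 {ι : Type*} [DecidableEq ι] (v : ι → ℝ) (M : Finset ι)
    (n : ℕ) (hn : 1 ≤ n) (ε : ℝ) (hε : 0 < ε) (hε1 : ε < 1)
    (B : Fin n → Finset ι) (hBsub : ∀ k, B k ⊆ M)
    (hBdisj : ∀ k l, k ≠ l → Disjoint (B k) (B l))
    (hBval : ∀ k, ∑ j ∈ B k, v j ≤ 1)
    (hbig : ∀ j ∈ M, ε ≤ |v j| → ∃ k, j ∈ B k)
    (hsmall : ∀ j ∈ M, (∀ k, j ∉ B k) → |v j| < ε)
    (htot : (n : ℝ) ≤ ∑ j ∈ M, v j) :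
    ∃ A : Fin n → Finset ι, IsPartition M n A ∧ (∀ k, B k ⊆ A k) ∧
      (∀ k, 1 - ε ≤ ∑ j ∈ A k, v j) ∧
      (∀ k : Fin n, (k : ℕ) + 1 < n → ∑ j ∈ A k, v j ≤ 1) :=
  bag_filling_cond1_general v M n hn ε hε B hBsub hBdisj hBval hsmall htot
end

section
/- If the Partition problem instance E = {e_1,...,e_m} of positive integers has a solution (a subset summing to half the total), then the mixed-manna instance with two identical agents, goods of values e_1,...,e_m and two chores each of value −(Σ_i e_i)/2 + 1/4, has maximin share MMS ≥ 1/4. -/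
open Finset
open scoped Classical

/-!
The whole instance is worth `Σ e + 2 (-(Σ e)/2 + 1/4) = 1/2`. The bundle made of one chore and
a Partition solution `S` is worth `(Σ e)/2 - (Σ e)/2 + 1/4 = 1/4`, so its complement (the other
chore and the rest of the goods) is worth `1/2 - 1/4 = 1/4` as well.
-/

theorem isPartition_univ_pair_compl {ι : Type*} [Fintype ι] [DecidableEq ι] (B : Finset ι) :
    IsPartition univ 2 ![B, Bᶜ] := by
  refine ⟨fun _ => subset_univ _, ?_, fun j _ => ?_⟩
  · intro k l hkl
    fin_cases k <;> fin_cases l <;> simp_all [disjoint_compl_right, disjoint_compl_left]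
  · by_cases hj : j ∈ B
    · exact ⟨0, by simpa using hj⟩
    · exact ⟨1, by simpa using hj⟩

noncomputable def mixedValuation {m : ℕ} (e : Fin m → ℕ) (j : Fin (m + 2)) : ℝ :=
  if h : (j : ℕ) < m then (e ⟨j, h⟩ : ℝ) else -((∑ i, e i : ℕ) : ℝ) / 2 + 1 / 4

section mixedValuation

variable {m : ℕ} (e : Fin m → ℕ)

@[simp]
theorem mixedValuation_castAdd (i : Fin m) : mixedValuation e (Fin.castAdd 2 i) = e i := by
  simp [mixedValuation]

@[simp]
theorem mixedValuation_natAdd (k : Fin 2) :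
    mixedValuation e (Fin.natAdd m k) = -((∑ i, e i : ℕ) : ℝ) / 2 + 1 / 4 := by
  simp [mixedValuation]

theorem sum_mixedValuation_univ : ∑ j, mixedValuation e j = 1 / 2 := by
  simp only [Fin.sum_univ_add, mixedValuation_castAdd, mixedValuation_natAdd, Fin.sum_univ_two]
  push_cast
  ring

def choreBundle (S : Finset (Fin m)) : Finset (Fin (m + 2)) :=
  insert (Fin.natAdd m 0) (S.map (Fin.castAddEmb 2))

theorem sum_mixedValuation_choreBundle (S : Finset (Fin m)) :
    ∑ j ∈ choreBundle S, mixedValuation e j =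
      ∑ i ∈ S, (e i : ℝ) - ((∑ i, e i : ℕ) : ℝ) / 2 + 1 / 4 := by
  have hchore : Fin.natAdd m 0 ∉ S.map (Fin.castAddEmb 2) := by
    simp [Fin.ext_iff, Nat.ne_of_lt]
  rw [choreBundle, sum_insert hchore, sum_map]
  simp only [Fin.castAddEmb_apply, mixedValuation_castAdd, mixedValuation_natAdd]
  ring

end mixedValuation

theorem partition_implies_mms_ge_quarter_general (m : ℕ) (e : Fin m → ℕ)
    (S : Finset (Fin m))
    (hS : 2 * ∑ i ∈ S, e i = ∑ i, e i) :
    ∃ A : Fin 2 → Finset (Fin (m + 2)),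
      IsPartition Finset.univ 2 A ∧
      ∀ k, (1 / 4 : ℝ) ≤ ∑ j ∈ A k,
        (if h : (j : ℕ) < m then (e ⟨j, h⟩ : ℝ)
         else -((∑ i, e i : ℕ) : ℝ) / 2 + 1 / 4) := by
  set B := choreBundle S
  have hS_real : 2 * ∑ i ∈ S, (e i : ℝ) = ((∑ i, e i : ℕ) : ℝ) := by exact_mod_cast hS
  have hB : ∑ j ∈ B, mixedValuation e j = 1 / 4 := by
    rw [sum_mixedValuation_choreBundle]
    linarith
  have hBc : ∑ j ∈ Bᶜ, mixedValuation e j = 1 / 4 := by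
    linarith [sum_compl_add_sum B (mixedValuation e), sum_mixedValuation_univ e]
  refine ⟨![B, Bᶜ], isPartition_univ_pair_compl B, fun k => ?_⟩
  fin_cases k
  · exact hB.ge
  · exact hBc.ge

/-- If the Partition instance `e_1,...,e_m` (positive integers) has a solution, then the
two-agent mixed manna instance with goods of values `e_j` and two chores of value
`-(Σ e)/2 + 1/4` admits a partition into two bundles each of value at least `1/4`;
in particular its maximin share is at least `1/4`. -/
theorem partition_implies_mms_ge_quarter (m : ℕ) (e : Fin m → ℕ)
    (hpos : ∀ i, 0 < e i) (S : Finset (Fin m))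
    (hS : 2 * ∑ i ∈ S, e i = ∑ i, e i) :
    ∃ A : Fin 2 → Finset (Fin (m + 2)),
      IsPartition Finset.univ 2 A ∧
      ∀ k, (1 / 4 : ℝ) ≤ ∑ j ∈ A k,
        (if h : (j : ℕ) < m then (e ⟨j, h⟩ : ℝ)
         else -((∑ i, e i : ℕ) : ℝ) / 2 + 1 / 4) :=
  partition_implies_mms_ge_quarter_general m e S hS
end

section
/- Consider the mixed-manna instance with two identical agents: goods 1..m with values given by positive integers e_1,...,e_m, and two chores each of value −(Σ_i e_i)/2 + 1/4, where Σ_i e_i is even and Σ_i e_i ≥ 2. If MMS > 0 for this instance, then the Partition instance {e_1,...,e_m} has a solution, i.e., there is a subset S ⊆ [m] with Σ_{j∈S} e_j = (Σ_j e_j)/2. -/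
open Finset
open scoped Classical

/-!
The values of all items add up to `1 / 2`, so in a partition whose two bundles both have positive
value, each bundle has value in `(0, 1 / 2)`. If a bundle holds goods of total value `G` and `k`
chores, four times its value is the integer `4 G + k - 2 k T` (with `T = Σ e`); lying strictly
between `0` and `2`, it equals `1`, so `k` is odd, i.e. `k = 1`, and then `2 G = T`.
-/

theorem IsPartition.sum_sum_eq {ι M : Type*} [DecidableEq ι] [AddCommMonoid M]
    {S : Finset ι} {n : ℕ} {A : Fin n → Finset ι} (hA : IsPartition S n A) (v : ι → M) :
    ∑ k, ∑ j ∈ A k, v j = ∑ j ∈ S, v j := by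
  obtain ⟨hsub, hdisj, hcov⟩ := hA
  have hunion : univ.biUnion A = S :=
    Subset.antisymm (biUnion_subset.mpr fun k _ => hsub k)
      fun j hj => by simpa using hcov j hj
  rw [← hunion, sum_biUnion fun k _ l _ hkl => hdisj k l hkl]

theorem Fin.sum_finset_add {M : Type*} [AddCommMonoid M] {a b : ℕ}
    (B : Finset (Fin (a + b))) (f : Fin (a + b) → M) :
    ∑ j ∈ B, f j = ∑ i ∈ univ.filter (fun i => Fin.castAdd b i ∈ B), f (Fin.castAdd b i)
      + ∑ i ∈ univ.filter (fun i => Fin.natAdd a i ∈ B), f (Fin.natAdd a i) := by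
  rw [sum_filter, sum_filter, ← Fin.sum_univ_add (fun j => if j ∈ B then f j else 0),
    ← sum_filter, filter_mem_eq_inter, univ_inter]

noncomputable def twoChoreValuation {m : ℕ} (e : Fin m → ℕ) : Fin (m + 2) → ℝ := fun j =>
  if h : (j : ℕ) < m then (e ⟨j, h⟩ : ℝ) else -((∑ i, e i : ℕ) : ℝ) / 2 + 1 / 4

section twoChoreValuation

variable {m : ℕ} (e : Fin m → ℕ)

theorem sum_twoChoreValuation (B : Finset (Fin (m + 2))) :
    ∑ j ∈ B, twoChoreValuation e j
      = ∑ i ∈ univ.filter (fun i => Fin.castAdd 2 i ∈ B), (e i : ℝ)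
        + #(univ.filter fun i : Fin 2 => Fin.natAdd m i ∈ B)
          * (-((∑ i, e i : ℕ) : ℝ) / 2 + 1 / 4) := by
  simp [Fin.sum_finset_add B, twoChoreValuation, mul_add]

theorem sum_univ_twoChoreValuation : ∑ j, twoChoreValuation e j = 1 / 2 := by
  simp [sum_twoChoreValuation]
  ring

theorem two_mul_sum_goods_eq_of_pos_of_lt {B : Finset (Fin (m + 2))}
    (hpos : 0 < ∑ j ∈ B, twoChoreValuation e j) (hlt : ∑ j ∈ B, twoChoreValuation e j < 1 / 2) :
    2 * ∑ i ∈ univ.filter (fun i => Fin.castAdd 2 i ∈ B), e i = ∑ i, e i := by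
  rw [sum_twoChoreValuation, ← Nat.cast_sum] at hpos hlt
  set G := ∑ i ∈ univ.filter (fun i => Fin.castAdd 2 i ∈ B), e i
  set k := #(univ.filter fun i : Fin 2 => Fin.natAdd m i ∈ B)
  set T := ∑ i, e i
  have hk : k ≤ 2 := (card_filter_le _ _).trans_eq (by simp)
  have hlo : (0 : ℤ) < 4 * G + k - 2 * k * T := by
    have : (0 : ℝ) < 4 * G + k - 2 * k * T := by linarith
    exact_mod_cast this
  have hhi : (4 * G + k - 2 * k * T : ℤ) < 2 := by
    have : (4 * G + k - 2 * k * T : ℝ) < 2 := by linarith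
    exact_mod_cast this
  interval_cases k <;> omega

end twoChoreValuation

theorem mms_pos_implies_partition_general (m : ℕ) (e : Fin m → ℕ)
    (μ : ℝ)
    (hMMS : IsMMS
      (fun j : Fin (m + 2) =>
        if h : (j : ℕ) < m then (e ⟨j, h⟩ : ℝ)
        else -((∑ i, e i : ℕ) : ℝ) / 2 + 1 / 4)
      Finset.univ 2 μ)
    (hμ : 0 < μ) :
    ∃ S : Finset (Fin m), 2 * ∑ i ∈ S, e i = ∑ i, e i := by
  obtain ⟨⟨A, hA, hAμ⟩, -⟩ := hMMS
  have hvalue : ∀ k, 0 < ∑ j ∈ A k, twoChoreValuation e j := fun k => hμ.trans_le (hAμ k)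
  have htotal : ∑ j ∈ A 0, twoChoreValuation e j + ∑ j ∈ A 1, twoChoreValuation e j = 1 / 2 := by
    rw [← Fin.sum_univ_two (fun k => ∑ j ∈ A k, twoChoreValuation e j), hA.sum_sum_eq,
      sum_univ_twoChoreValuation]
  exact ⟨_, two_mul_sum_goods_eq_of_pos_of_lt e (hvalue 0) (by linarith [hvalue 1])⟩

/-- For the two-agent mixed manna instance with goods `e_1,...,e_m` (positive integers
with even sum at least 2) and two chores of value `-(Σ e)/2 + 1/4` each: if the maximin
share is positive, then the Partition instance has a solution. -/
theorem mms_pos_implies_partition (m : ℕ) (e : Fin m → ℕ)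
    (hpos : ∀ i, 0 < e i) (heven : 2 ∣ ∑ i, e i) (hT : 2 ≤ ∑ i, e i)
    (μ : ℝ)
    (hMMS : IsMMS
      (fun j : Fin (m + 2) =>
        if h : (j : ℕ) < m then (e ⟨j, h⟩ : ℝ)
        else -((∑ i, e i : ℕ) : ℝ) / 2 + 1 / 4)
      Finset.univ 2 μ)
    (hμ : 0 < μ) :
    ∃ S : Finset (Fin m), 2 * ∑ i ∈ S, e i = ∑ i, e i :=
  mms_pos_implies_partition_general m e μ hMMS hμ
end

section
/- Let e_1,...,e_m be positive integers with even sum T = Σ e_i. Consider the n-item-set instance with goods e_1,...,e_m, additional n−2 goods each of value 1/4, and two chores each of value −T/2 + 1/4. If the Partition instance has a solution, then the n-agent maximin share of this instance equals 1/4. -/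
open Finset
open scoped Classical

/-!
Split the goods along the Partition solution `S` and add one chore to each half: both bundles
are worth `T/2 - T/2 + 1/4 = 1/4`, and each of the remaining `n - 2` bundles takes one good worth
`1/4`. Conversely the whole instance is worth `n/4`, so by averaging every partition has a bundle
worth at most `1/4`.
-/

namespace IsPartition

variable {ι : Type*} [DecidableEq ι] {M : Finset ι} {n : ℕ} {A : Fin n → Finset ι}

theorem biUnion_eq (hA : IsPartition M n A) : univ.biUnion A = M := by
  ext j
  simp only [mem_biUnion, mem_univ, true_and]
  exact ⟨fun ⟨k, hk⟩ => hA.1 k hk, hA.2.2 j⟩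

theorem sum_sum_eq_s15 {β : Type*} [AddCommMonoid β] (hA : IsPartition M n A) (v : ι → β) :
    ∑ k, ∑ j ∈ A k, v j = ∑ j ∈ M, v j := by
  rw [← hA.biUnion_eq, sum_biUnion fun k _ l _ hkl => hA.2.1 k l hkl]

theorem exists_sum_le_div (hA : IsPartition M n A) (hn : 0 < n) (v : ι → ℝ) :
    ∃ k, ∑ j ∈ A k, v j ≤ (∑ j ∈ M, v j) / n := by
  have hsum : ∑ k, ∑ j ∈ A k, v j ≤ ∑ _k : Fin n, (∑ j ∈ M, v j) / n := by
    rw [hA.sum_sum_eq_s15, sum_const, card_univ, Fintype.card_fin, nsmul_eq_mul,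
      mul_div_cancel₀ _ (by positivity)]
  obtain ⟨k, -, hk⟩ := exists_le_of_sum_le (univ_nonempty_iff.2 ⟨⟨0, hn⟩⟩) hsum
  exact ⟨k, hk⟩

end IsPartition

theorem isPartition_filter_eq {ι : Type*} [DecidableEq ι] (M : Finset ι) {n : ℕ}
    (f : ι → Fin n) : IsPartition M n fun k => M.filter (f · = k) :=
  ⟨fun _ => filter_subset _ _,
    fun _ _ hkl => disjoint_filter.2 fun _ _ h₁ h₂ => hkl (h₁ ▸ h₂),
    fun j hj => ⟨f j, mem_filter.2 ⟨hj, rfl⟩⟩⟩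

theorem isMMS_of_forall_le_of_sum_eq {ι : Type*} [DecidableEq ι] {v : ι → ℝ} {M : Finset ι}
    {n : ℕ} {μ : ℝ} (hn : 0 < n) {A : Fin n → Finset ι} (hA : IsPartition M n A)
    (hle : ∀ k, μ ≤ ∑ j ∈ A k, v j) (hsum : ∑ j ∈ M, v j = n * μ) : IsMMS v M n μ := by
  refine ⟨⟨A, hA, hle⟩, fun B hB => ?_⟩
  obtain ⟨k, hk⟩ := hB.exists_sum_le_div hn v
  rw [hsum, mul_div_cancel_left₀ _ (by positivity)] at hk
  exact ⟨k, hk⟩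

section FinAppend

variable {m n : ℕ}

theorem sum_filter_append_id_eq (g : Fin m → ℝ) (w : Fin n → ℝ) (a : Fin m → Fin n)
    (k : Fin n) :
    ∑ j ∈ univ.filter (Fin.append a id · = k), Fin.append g w j =
      ∑ i ∈ univ.filter (a · = k), g i + w k := by
  simp only [sum_filter, Fin.sum_univ_add, Fin.append_left, Fin.append_right, id,
    sum_ite_eq', mem_univ, if_true]

theorem sum_append (g : Fin m → ℝ) (w : Fin n → ℝ) :
    ∑ j, Fin.append g w j = ∑ i, g i + ∑ k, w k := by
  simp only [Fin.sum_univ_add, Fin.append_left, Fin.append_right]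

end FinAppend

noncomputable def reductionValuation {m : ℕ} (g : Fin m → ℝ) (p : ℕ) : Fin (m + (p + 2)) → ℝ :=
  Fin.append g (Fin.append (fun _ : Fin p => 1 / 4) fun _ : Fin 2 => -(∑ i, g i) / 2 + 1 / 4)

theorem isMMS_reductionValuation {m : ℕ} (g : Fin m → ℝ) (p : ℕ) {S : Finset (Fin m)}
    (hS : 2 * ∑ i ∈ S, g i = ∑ i, g i) :
    IsMMS (reductionValuation g p) univ (p + 2) (1 / 4) := by
  -- Bundle `k` gets the `k`-th of the last `p + 2` items; the chores sit in bundles `p`, `p + 1`,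
  -- which also receive the halves `S` and `Sᶜ` of the goods.
  set a : Fin m → Fin (p + 2) := fun i => Fin.natAdd p (if i ∈ S then 0 else 1)
  have hcompl : ∑ i ∈ univ.filter (· ∉ S), g i = ∑ i ∈ S, g i := by
    have := sum_filter_add_sum_filter_not univ (· ∈ S) g
    simp only [filter_mem_eq_inter, univ_inter] at this
    linarith
  refine isMMS_of_forall_le_of_sum_eq (by omega) (isPartition_filter_eq univ (Fin.append a id))
    (fun k => ?_) ?_
  · rw [reductionValuation, sum_filter_append_id_eq]
    refine Fin.addCases (fun q => ?_) (fun c => ?_) k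
    · have hnone : univ.filter (a · = Fin.castAdd 2 q) = ∅ :=
        filter_false_of_mem fun i _ h => by simp [a, Fin.ext_iff] at h; omega
      simp [hnone]
    · fin_cases c
      · simp only [a, Fin.append_right, Fin.zero_eta, Fin.natAdd_inj, Fin.isValue, ite_eq_left_iff,
          one_ne_zero, imp_false, Decidable.not_not, filter_mem_eq_of_subset, subset_univ]
        linarith
      · simp only [a, Fin.append_right, Fin.mk_one, Fin.natAdd_inj, Fin.isValue, ite_eq_right_iff,
          zero_ne_one, imp_false, hcompl]
        linarith
  · rw [reductionValuation, sum_append, sum_append]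
    simp only [sum_const, card_univ, Fintype.card_fin, nsmul_eq_mul, Nat.cast_add,
      Nat.cast_ofNat]
    ring

theorem reductionValuation_eq {m : ℕ} (e : Fin m → ℕ) (p : ℕ) :
    reductionValuation (fun i => (e i : ℝ)) p = fun j : Fin (m + (p + 2)) =>
      if h : (j : ℕ) < m then (e ⟨j, h⟩ : ℝ)
      else if (j : ℕ) < m + (p + 2) - 2 then 1 / 4
      else -((∑ i, e i : ℕ) : ℝ) / 2 + 1 / 4 := by
  funext j
  refine Fin.addCases (fun i => ?_) (fun k => Fin.addCases (fun q => ?_) (fun c => ?_) k) j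
  · simp [reductionValuation]
  · have hq : m + (q : ℕ) < m + (p + 2) - 2 := by omega
    simp [reductionValuation, hq]
  · have hc : ¬ m + (p + (c : ℕ)) < m + (p + 2) - 2 := by omega
    simp [reductionValuation, hc]

theorem partition_implies_mms_eq_quarter_general (m n : ℕ) (hn : 2 ≤ n) (e : Fin m → ℕ)
    (S : Finset (Fin m))
    (hS : 2 * ∑ i ∈ S, e i = ∑ i, e i) :
    IsMMS
      (fun j : Fin (m + n) =>
        if h : (j : ℕ) < m then (e ⟨j, h⟩ : ℝ)
        else if (j : ℕ) < m + n - 2 then 1 / 4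
        else -((∑ i, e i : ℕ) : ℝ) / 2 + 1 / 4)
      Finset.univ n (1 / 4) := by
  obtain ⟨p, rfl⟩ := Nat.exists_eq_add_of_le' hn
  rw [← reductionValuation_eq]
  exact isMMS_reductionValuation _ p (by exact_mod_cast hS)

/-- `n`-agent hard instance: goods `e_1,...,e_m` (positive integers with even sum `T`),
`n-2` extra goods of value `1/4`, and two chores of value `-T/2 + 1/4`. If the Partition
instance has a solution, then the `n`-agent maximin share of this instance equals
`1/4`. -/
theorem partition_implies_mms_eq_quarter (m n : ℕ) (hn : 2 ≤ n) (e : Fin m → ℕ)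
    (hpos : ∀ i, 0 < e i) (S : Finset (Fin m))
    (hS : 2 * ∑ i ∈ S, e i = ∑ i, e i) :
    IsMMS
      (fun j : Fin (m + n) =>
        if h : (j : ℕ) < m then (e ⟨j, h⟩ : ℝ)
        else if (j : ℕ) < m + n - 2 then 1 / 4
        else -((∑ i, e i : ℕ) : ℝ) / 2 + 1 / 4)
      Finset.univ n (1 / 4) :=
  partition_implies_mms_eq_quarter_general m n hn e S hS
end
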